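/- arXiv:1011.5986 — 2 statements merged into one kernel-verified Lean document; each statement's English description precedes it below -/
import Mathlib

section
/- Let 1 ≤ p ≤ ∞ and let q be the conjugate exponent (q = 1 for p = ∞). Then the dual cone of L^p_d(K_T) in L^q_d equals L^q_d(K_T^+), i.e., {Y ∈ L^q_d : E[XᵀY] ≥ 0 for all X ∈ L^p_d(K_T)} = {Y ∈ L^q_d : Y(ω) ∈ [K_T(ω)]^+ P-a.s.}. -/
open MeasureTheory Set Filter Topology Pointwise ENNReal

noncomputable section

/-- `ℝ^d` -/
abbrev Vec (d : ℕ) := Fin d → ℝ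

/-- the Euclidean dot (bilinear) pairing `vᵀu` on `ℝ^d` -/
def dotp {d : ℕ} (v u : Vec d) : ℝ := ∑ i, v i * u i

/-- the nonnegative orthant `ℝ^d_+` -/
def posOrthant (d : ℕ) : Set (Vec d) := {x | ∀ i, 0 ≤ x i}

/-- the (positive) dual cone of a set `C ⊆ ℝ^d` -/
def posDual {d : ℕ} (C : Set (Vec d)) : Set (Vec d) := {v | ∀ x ∈ C, 0 ≤ dotp v x}

/-- the orthogonal complement `M^⊥` of a subspace -/
def perpSet {d : ℕ} (M : Submodule ℝ (Vec d)) : Set (Vec d) := {v | ∀ u ∈ M, dotp v u = 0}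

/-- the half space `G(w) = {x : wᵀx ≥ 0}` -/
def Gset {d : ℕ} (w : Vec d) : Set (Vec d) := {x | 0 ≤ dotp w x}

/-- a closed convex cone `K` with `ℝ^d_+ ⊆ K ≠ ℝ^d` (a solvency cone) -/
def IsSolvencyCone {d : ℕ} (K : Set (Vec d)) : Prop :=
  IsClosed K ∧ Convex ℝ K ∧ (∀ t : ℝ, 0 < t → ∀ x ∈ K, t • x ∈ K) ∧
    posOrthant d ⊆ K ∧ K ≠ univ

variable {Ω : Type*} [MeasurableSpace Ω]

/-- the constant (deterministic) random vector `u𝟙 ∈ L^p_d` -/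
def constLp (μ : Measure Ω) [IsFiniteMeasure μ] (d : ℕ) (p : ℝ≥0∞) (u : Vec d) :
    Lp (Vec d) p μ := MeasureTheory.Lp.const p μ u

/-- the cone `(L^p_d)_+` of a.s. componentwise nonnegative elements of `L^p_d` -/
def LpNonneg (μ : Measure Ω) [IsFiniteMeasure μ] (d : ℕ) (p : ℝ≥0∞) :
    Set (Lp (Vec d) p μ) := {X | ∀ᵐ ω ∂μ, ∀ i, 0 ≤ X ω i}

/-- an acceptance set in `L^p_d` -/
def IsAcceptanceSet {μ : Measure Ω} [IsFiniteMeasure μ] {d : ℕ} {p : ℝ≥0∞}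
    (A : Set (Lp (Vec d) p μ)) : Prop :=
  (∃ x : Vec d, constLp μ d p x ∈ A) ∧ (∃ x : Vec d, constLp μ d p x ∉ A) ∧
    ∀ X ∈ A, ∀ Y ∈ LpNonneg μ d p, X + Y ∈ A

/-- the function `R_A` induced by a set `A ⊆ L^p_d` -/
def RA {μ : Measure Ω} [IsFiniteMeasure μ] {d : ℕ} {p : ℝ≥0∞} (M : Submodule ℝ (Vec d))
    (A : Set (Lp (Vec d) p μ)) (X : Lp (Vec d) p μ) : Set (Vec d) :=
  {u | u ∈ M ∧ X + constLp μ d p u ∈ A}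

/-- the acceptance set `A_R` induced by a function `R` -/
def AR {μ : Measure Ω} {d : ℕ} {p : ℝ≥0∞} (R : Lp (Vec d) p μ → Set (Vec d)) :
    Set (Lp (Vec d) p μ) := {X | 0 ∈ R X}

/-- `R` is translative in `M`: `R(X + u𝟙) = R(X) − u` for `u ∈ M` -/
def MTranslative {μ : Measure Ω} [IsFiniteMeasure μ] {d : ℕ} {p : ℝ≥0∞}
    (M : Submodule ℝ (Vec d)) (R : Lp (Vec d) p μ → Set (Vec d)) : Prop :=
  ∀ X : Lp (Vec d) p μ, ∀ u ∈ M, R (X + constLp μ d p u) = (fun w => w - u) '' R X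

/-- `R` is `B`-monotone: `X² − X¹ ∈ B ⟹ R(X²) ⊇ R(X¹)` -/
def BMonotone {μ : Measure Ω} {d : ℕ} {p : ℝ≥0∞} (B : Set (Lp (Vec d) p μ))
    (R : Lp (Vec d) p μ → Set (Vec d)) : Prop :=
  ∀ X₁ X₂ : Lp (Vec d) p μ, X₂ - X₁ ∈ B → R X₁ ⊆ R X₂

/-- a (set-valued) risk measure: an `M`-translative, `(L^p_d)_+`-monotone function
mapping into the power set of `M` -/
def IsRiskMeasure {μ : Measure Ω} [IsFiniteMeasure μ] {d : ℕ} {p : ℝ≥0∞}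
    (M : Submodule ℝ (Vec d)) (R : Lp (Vec d) p μ → Set (Vec d)) : Prop :=
  (∀ X, R X ⊆ (M : Set (Vec d))) ∧ MTranslative M R ∧ BMonotone (LpNonneg μ d p) R

/-- `R` is finite at zero -/
def FiniteAtZero {μ : Measure Ω} {d : ℕ} {p : ℝ≥0∞} (M : Submodule ℝ (Vec d))
    (R : Lp (Vec d) p μ → Set (Vec d)) : Prop :=
  R 0 ≠ ∅ ∧ R 0 ≠ (M : Set (Vec d))

/-- measurability of a set-valued map -/
def MeasurableSetValued {d : ℕ} (K : Ω → Set (Vec d)) : Prop :=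
  ∀ B : Set (Vec d), IsOpen B → MeasurableSet {ω | (K ω ∩ B).Nonempty}

/-- `L^p_d(K) = {X ∈ L^p_d : X(ω) ∈ K(ω)` a.s.`}` -/
def LpSection (μ : Measure Ω) [IsFiniteMeasure μ] (d : ℕ) (p : ℝ≥0∞)
    (K : Ω → Set (Vec d)) : Set (Lp (Vec d) p μ) := {X | ∀ᵐ ω ∂μ, X ω ∈ K ω}


/-- the market model hypotheses on `K_T`: measurable set-valued map with solvency-cone
values -/
def IsMarketMapKT {d : ℕ} (KT : Ω → Set (Vec d)) : Prop :=
  MeasurableSetValued KT ∧ ∀ ω, IsSolvencyCone (KT ω)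

/-- `K_T`-compatibility of an acceptance set: `A + L^p_d(K_T) ⊆ A` -/
def KTcompatSet {μ : Measure Ω} [IsFiniteMeasure μ] {d : ℕ} {p : ℝ≥0∞}
    (KT : Ω → Set (Vec d)) (A : Set (Lp (Vec d) p μ)) : Prop :=
  ∀ X ∈ A, ∀ Y ∈ LpSection μ d p KT, X + Y ∈ A

/-- `K_I`-compatibility of an acceptance set: `A + K_I^M𝟙 ⊆ A` -/
def KIcompatSet {μ : Measure Ω} [IsFiniteMeasure μ] {d : ℕ} {p : ℝ≥0∞}
    (M : Submodule ℝ (Vec d)) (KI : Set (Vec d)) (A : Set (Lp (Vec d) p μ)) : Prop :=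
  ∀ X ∈ A, ∀ k ∈ KI ∩ (M : Set (Vec d)), X + constLp μ d p k ∈ A

/-- `K_T`-compatibility of a risk measure: `L^p_d(K_T)`-monotonicity -/
def KTcompatR {μ : Measure Ω} [IsFiniteMeasure μ] {d : ℕ} {p : ℝ≥0∞}
    (KT : Ω → Set (Vec d)) (R : Lp (Vec d) p μ → Set (Vec d)) : Prop :=
  BMonotone (LpSection μ d p KT) R

/-- `K_I`-compatibility of a risk measure: its values `D` satisfy `D = D + K_I^M` -/
def KIcompatR {μ : Measure Ω} {d : ℕ} {p : ℝ≥0∞}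
    (M : Submodule ℝ (Vec d)) (KI : Set (Vec d)) (R : Lp (Vec d) p μ → Set (Vec d)) :
    Prop :=
  ∀ X, R X + (KI ∩ (M : Set (Vec d))) = R X

/-- the bilinear pairing `(X,Y) ↦ E[XᵀY]` between `L^p_d` and `L^q_d` -/
def pairLp {μ : Measure Ω} {d : ℕ} {p q : ℝ≥0∞} (X : Lp (Vec d) p μ)
    (Y : Lp (Vec d) q μ) : ℝ := ∫ ω, dotp (X ω) (Y ω) ∂μ

/-- the componentwise expectation `E[Y] ∈ ℝ^d` -/
def meanVec {d : ℕ} {r : ℝ≥0∞} (μ : Measure Ω) (Y : Lp (Vec d) r μ) : Vec d :=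
  fun i => ∫ ω, Y ω i ∂μ

/-!
Since `K_T(ω)` is convex and contains `ℝ^d_+`, it has nonempty interior and is therefore the
closure of its points in a fixed countable dense set `S ⊆ ℝ^d`; so `Y(ω) ∈ K_T(ω)^+` as soon as
`Y(ω)ᵀc ≥ 0` for every `c ∈ S ∩ K_T(ω)`. As `K_T` has closed values, `{ω | c ∈ K_T(ω)}` is
measurable, and testing `Y` against `c 𝟙_s` for measurable `s` inside it gives `Y ᵀ c ≥ 0` a.s.
there. This avoids any measurable selection theorem.
-/

lemma dotp_comm {d : ℕ} (v u : Vec d) : dotp v u = dotp u v :=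
  dotProduct_comm v u

lemma isClosed_Gset {d : ℕ} (w : Vec d) : IsClosed (Gset w) :=
  isClosed_le continuous_const (by unfold dotp; fun_prop)

lemma interior_posOrthant_nonempty (d : ℕ) : (interior (posOrthant d)).Nonempty := by
  have hopen : IsOpen {x : Vec d | ∀ i, 0 < x i} := by
    simpa only [ofPred_forall] using
      isOpen_iInter_of_finite fun i => isOpen_lt continuous_const (continuous_apply i)
  exact ⟨fun _ => 1, interior_maximal (fun x hx i => (hx i).le) hopen fun _ => one_pos⟩

namespace IsSolvencyCone

variable {d : ℕ} {K : Set (Vec d)}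

lemma isClosed (hK : IsSolvencyCone K) : IsClosed K := hK.1

lemma convex (hK : IsSolvencyCone K) : Convex ℝ K := hK.2.1

lemma zero_mem (hK : IsSolvencyCone K) : (0 : Vec d) ∈ K :=
  hK.2.2.2.1 fun _ => le_rfl

lemma interior_nonempty (hK : IsSolvencyCone K) : (interior K).Nonempty :=
  (interior_posOrthant_nonempty d).mono (interior_mono hK.2.2.2.1)

end IsSolvencyCone

lemma Convex.subset_closure_inter_of_dense {E : Type*} [AddCommGroup E] [Module ℝ E]
    [TopologicalSpace E] [IsTopologicalAddGroup E] [ContinuousSMul ℝ E] {K S : Set E}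
    (hK : Convex ℝ K) (hint : (interior K).Nonempty) (hS : Dense S) :
    K ⊆ closure (K ∩ S) :=
  calc K ⊆ closure K := subset_closure
    _ = closure (interior K) := (hK.closure_interior_eq_closure_of_nonempty_interior hint).symm
    _ ⊆ closure (interior K ∩ S) :=
      closure_minimal (hS.open_subset_closure_inter isOpen_interior) isClosed_closure
    _ ⊆ closure (K ∩ S) := closure_mono (inter_subset_inter_left _ interior_subset)

lemma mem_posDual_of_dense {d : ℕ} {K S : Set (Vec d)} (hK : Convex ℝ K)
    (hint : (interior K).Nonempty) (hS : Dense S) {v : Vec d}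
    (hv : ∀ c ∈ K ∩ S, 0 ≤ dotp v c) : v ∈ posDual K :=
  (hK.subset_closure_inter_of_dense hint hS).trans (closure_minimal hv (isClosed_Gset v))

lemma MeasurableSetValued.measurableSet_mem {d : ℕ} {K : Ω → Set (Vec d)}
    (hK : MeasurableSetValued K) (hcl : ∀ ω, IsClosed (K ω)) (x : Vec d) :
    MeasurableSet {ω | x ∈ K ω} := by
  have h : {ω | x ∈ K ω} = ⋂ n : ℕ, {ω | (K ω ∩ Metric.ball x (1 / (n + 1))).Nonempty} := by
    ext ω
    conv_lhs => rw [mem_ofPred_eq, ← (hcl ω).closure_eq]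
    simp only [mem_closure_iff_nhds_basis' Metric.nhds_basis_ball_inv_nat_succ, inter_comm,
      forall_const, mem_iInter, mem_ofPred_eq]
  rw [h]
  exact .iInter fun _ => hK _ Metric.isOpen_ball

lemma ae_nonneg_dotp_of_forall_pairLp_nonneg {μ : Measure Ω} [IsFiniteMeasure μ] {d : ℕ}
    {p q : ℝ≥0∞} {K : Ω → Set (Vec d)} (h0 : ∀ ω, (0 : Vec d) ∈ K ω)
    {Y : Lp (Vec d) q μ} (hY_int : Integrable Y μ)
    (hY : ∀ X ∈ LpSection μ d p K, 0 ≤ pairLp X Y) {S : Set Ω} (hS : MeasurableSet S)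
    {c : Vec d} (hc : ∀ ω ∈ S, c ∈ K ω) :
    ∀ᵐ ω ∂μ, ω ∈ S → 0 ≤ dotp (Y ω) c := by
  have hdotp_int : Integrable (fun ω => dotp c (Y ω)) μ :=
    integrable_finsetSum _ fun i _ => (hY_int.eval i).const_mul (c i)
  have hset : ∀ s, MeasurableSet s → μ s < ∞ →
      0 ≤ ∫ ω in s, S.indicator (fun ω => dotp c (Y ω)) ω ∂μ := by
    intro s hs _
    set X := indicatorConstLp p (hs.inter hS) (measure_ne_top μ _) c
    have hX_eq : ⇑X =ᵐ[μ] (s ∩ S).indicator fun _ => c := indicatorConstLp_coeFn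
    have hX : X ∈ LpSection μ d p K := by
      filter_upwards [hX_eq] with ω hω
      by_cases h : ω ∈ s ∩ S
      · simpa [hω, h] using hc ω h.2
      · simpa [hω, h] using h0 ω
    calc 0 ≤ pairLp X Y := hY X hX
      _ = ∫ ω, (s ∩ S).indicator (fun ω => dotp c (Y ω)) ω ∂μ := by
        refine integral_congr_ae ?_
        filter_upwards [hX_eq] with ω hω
        by_cases h : ω ∈ s ∩ S <;> simp [hω, h, dotp]
      _ = ∫ ω in s, S.indicator (fun ω => dotp c (Y ω)) ω ∂μ := by
        rw [integral_indicator (hs.inter hS), setIntegral_indicator hS]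
  filter_upwards [ae_nonneg_of_forall_setIntegral_nonneg (hdotp_int.indicator hS) hset]
    with ω hω hωS
  simpa [hωS, dotp_comm c] using hω

theorem dual_cone_of_LpKT_general
    (μ : Measure Ω) [IsProbabilityMeasure μ] (d : ℕ)
    (p q : ℝ≥0∞) (hpq : 1 / p + 1 / q = 1)
    (KT : Ω → Set (Vec d)) (hKT : IsMarketMapKT KT) :
    {Y : Lp (Vec d) q μ | ∀ X ∈ LpSection μ d p KT, 0 ≤ pairLp X Y} =
      {Y : Lp (Vec d) q μ | ∀ᵐ ω ∂μ, Y ω ∈ posDual (KT ω)} := by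
  obtain ⟨hmeas, hcone⟩ := hKT
  ext Y
  constructor
  · intro hY
    have hq : 1 ≤ q := by
      have h : 1 / q ≤ 1 := (le_add_self (a := 1 / q) (b := 1 / p)).trans_eq hpq
      rwa [one_div, ENNReal.inv_le_one] at h
    have hY_int : Integrable Y μ :=
      memLp_one_iff_integrable.mp ((Lp.memLp Y).mono_exponent hq)
    obtain ⟨S, hS_count, hS_dense⟩ := TopologicalSpace.exists_countable_dense (Vec d)
    have hY_S : ∀ᵐ ω ∂μ, ∀ c ∈ S, c ∈ KT ω → 0 ≤ dotp (Y ω) c :=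
      (ae_ball_iff hS_count).2 fun c _ =>
        ae_nonneg_dotp_of_forall_pairLp_nonneg (fun ω => (hcone ω).zero_mem) hY_int hY
          (hmeas.measurableSet_mem (fun ω => (hcone ω).isClosed) c) fun _ h => h
    filter_upwards [hY_S] with ω hω
    exact mem_posDual_of_dense (hcone ω).convex (hcone ω).interior_nonempty hS_dense
      fun c hc => hω c hc.2 hc.1
  · intro hY X hX
    refine integral_nonneg_of_ae ?_
    filter_upwards [hX, hY] with ω hXω hYω
    rw [dotp_comm]
    exact hYω _ hXω

/-- The dual cone of `L^p_d(K_T)` in `L^q_d` is `L^q_d(K_T^+)`. -/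
theorem dual_cone_of_LpKT
    (μ : Measure Ω) [IsProbabilityMeasure μ] (d : ℕ) (hd : 1 ≤ d)
    (p q : ℝ≥0∞) (hp : 1 ≤ p) (hpq : 1 / p + 1 / q = 1)
    (KT : Ω → Set (Vec d)) (hKT : IsMarketMapKT KT) :
    {Y : Lp (Vec d) q μ | ∀ X ∈ LpSection μ d p KT, 0 ≤ pairLp X Y} =
      {Y : Lp (Vec d) q μ | ∀ᵐ ω ∂μ, Y ω ∈ posDual (KT ω)} :=
  dual_cone_of_LpKT_general μ d p q hpq KT hKT
end
end

section
/- Let 1 ≤ p ≤ ∞, q the conjugate exponent, Y ∈ L^q_d and v ∈ M, and define R : L^p_d → 𝒫(M) by R(X) = F^M_{(Y,v)}[−X] = {u ∈ M : E[(−X)ᵀY] ≤ vᵀu}. Then R is M-translative if and only if v ∈ E[Y] + M^⊥, where E[Y] ∈ ℝ^d is the (componentwise) expectation of Y. -/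
open MeasureTheory Set Filter Topology Pointwise ENNReal

noncomputable section

variable {Ω : Type*} [MeasurableSpace Ω]

/-- the set-valued function `F^M_{(Y,v)}[X] = {u ∈ M : E[XᵀY] ≤ vᵀu}` -/
def FM {μ : Measure Ω} {d : ℕ} {p q : ℝ≥0∞} (M : Submodule ℝ (Vec d))
    (Y : Lp (Vec d) q μ) (v : Vec d) (X : Lp (Vec d) p μ) : Set (Vec d) :=
  {u | u ∈ M ∧ pairLp X Y ≤ dotp v u}

/-! By Hölder, `X ↦ E[XᵀY]` is additive on `L^p_d`, so `R(X + u𝟙)` is the half space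
`{z ∈ M : E[(-X)ᵀY] - E[Y]ᵀu ≤ vᵀz}` of `M`, while `R(X) - u` is the one with threshold
`E[(-X)ᵀY] - vᵀu`. Translativity therefore holds once `vᵀu = E[Y]ᵀu` on `M`; conversely,
comparing the two half spaces at `X = 0` in the point `-u` gives `vᵀu ≤ E[Y]ᵀu`, and
replacing `u` by `-u` gives equality. -/

lemma dotp_eq_dotProduct {d : ℕ} (v u : Vec d) : dotp v u = v ⬝ᵥ u := rfl

section Subspace

variable {d : ℕ} {M : Submodule ℝ (Vec d)}

lemma mem_singleton_add_perpSet_iff {e v : Vec d} :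
    v ∈ {e} + perpSet M ↔ ∀ u ∈ M, dotp v u = dotp e u := by
  simp only [singleton_add, mem_image, perpSet, mem_ofPred_eq, dotp_eq_dotProduct]
  constructor
  · rintro ⟨w, hw, rfl⟩ u hu
    rw [add_dotProduct, hw u hu, add_zero]
  · intro h
    exact ⟨v - e, fun u hu => by rw [sub_dotProduct, h u hu, sub_self], add_sub_cancel e v⟩

lemma forall_dotp_eq_of_forall_le {e v : Vec d} (h : ∀ u ∈ M, dotp v u ≤ dotp e u) :
    ∀ u ∈ M, dotp v u = dotp e u := by
  intro u hu
  refine (h u hu).antisymm ?_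
  have h' := h (-u) (M.neg_mem hu)
  simp only [dotp_eq_dotProduct, dotProduct_neg] at h' ⊢
  linarith

def halfSpaceIn (M : Submodule ℝ (Vec d)) (v : Vec d) (a : ℝ) : Set (Vec d) :=
  {z | z ∈ M ∧ a ≤ dotp v z}

lemma image_sub_halfSpaceIn {u : Vec d} (hu : u ∈ M) (v : Vec d) (a : ℝ) :
    (fun z => z - u) '' halfSpaceIn M v a = halfSpaceIn M v (a - dotp v u) := by
  ext z
  constructor
  · rintro ⟨w, ⟨hwM, hw⟩, rfl⟩
    refine ⟨M.sub_mem hwM hu, ?_⟩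
    simp only [dotp_eq_dotProduct, dotProduct_sub] at *
    linarith
  · rintro ⟨hzM, hz⟩
    refine ⟨z + u, ⟨M.add_mem hzM hu, ?_⟩, add_sub_cancel_right z u⟩
    simp only [dotp_eq_dotProduct, dotProduct_add] at *
    linarith

lemma dotp_le_of_halfSpaceIn_eq {u v : Vec d} {b : ℝ} (hu : u ∈ M)
    (h : halfSpaceIn M v (-b) = halfSpaceIn M v (-dotp v u)) : dotp v u ≤ b := by
  have hmem : -u ∈ halfSpaceIn M v (-dotp v u) :=
    ⟨M.neg_mem hu, by rw [dotp_eq_dotProduct, dotp_eq_dotProduct, dotProduct_neg]⟩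
  obtain ⟨-, hle⟩ := h ▸ hmem
  rw [dotp_eq_dotProduct, dotProduct_neg, neg_le_neg_iff] at hle
  exact hle

end Subspace

section Pairing

variable {μ : Measure Ω} {d : ℕ} {p q : ℝ≥0∞}

lemma integrable_dotp [p.HolderConjugate q] (X : Lp (Vec d) p μ) (Y : Lp (Vec d) q μ) :
    Integrable (fun ω => dotp (X ω) (Y ω)) μ :=
  integrable_finsetSum _ fun i _ =>
    ((Lp.memLp X).eval i).integrable_mul ((Lp.memLp Y).eval i)

lemma pairLp_neg (X : Lp (Vec d) p μ) (Y : Lp (Vec d) q μ) :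
    pairLp (-X) Y = -pairLp X Y := by
  rw [pairLp, pairLp, ← integral_neg]
  refine integral_congr_ae ?_
  filter_upwards [Lp.coeFn_neg X] with ω hω
  rw [hω, dotp_eq_dotProduct, dotp_eq_dotProduct, Pi.neg_apply, neg_dotProduct]

lemma pairLp_zero (Y : Lp (Vec d) q μ) : pairLp (0 : Lp (Vec d) p μ) Y = 0 := by
  have h := pairLp_neg (0 : Lp (Vec d) p μ) Y
  rw [neg_zero] at h
  linarith

lemma pairLp_add [p.HolderConjugate q] (X₁ X₂ : Lp (Vec d) p μ) (Y : Lp (Vec d) q μ) :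
    pairLp (X₁ + X₂) Y = pairLp X₁ Y + pairLp X₂ Y := by
  rw [pairLp, pairLp, pairLp, ← integral_add (integrable_dotp X₁ Y) (integrable_dotp X₂ Y)]
  refine integral_congr_ae ?_
  filter_upwards [Lp.coeFn_add X₁ X₂] with ω hω
  simp only [hω, dotp_eq_dotProduct, Pi.add_apply, add_dotProduct]

lemma pairLp_constLp [IsFiniteMeasure μ] (hq : 1 ≤ q) (u : Vec d) (Y : Lp (Vec d) q μ) :
    pairLp (constLp μ d p u) Y = dotp u (meanVec μ Y) := by
  have hY : ∀ i, Integrable (fun ω => Y ω i) μ := fun i => ((Lp.memLp Y).eval i).integrable hq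
  calc pairLp (constLp μ d p u) Y = ∫ ω, ∑ i, u i * Y ω i ∂μ := by
        refine integral_congr_ae ?_
        filter_upwards [Lp.coeFn_const (μ := μ) (p := p) u] with ω hω
        rw [constLp, hω]
        rfl
    _ = dotp u (meanVec μ Y) := by
        rw [integral_finsetSum _ fun i _ => (hY i).const_mul (u i)]
        simp only [integral_const_mul, dotp, meanVec]

lemma pairLp_neg_add_constLp [IsFiniteMeasure μ] [p.HolderConjugate q] (X : Lp (Vec d) p μ)
    (u : Vec d) (Y : Lp (Vec d) q μ) :
    pairLp (-(X + constLp μ d p u)) Y = pairLp (-X) Y - dotp (meanVec μ Y) u := by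
  rw [pairLp_neg, pairLp_neg, pairLp_add, pairLp_constLp (ENNReal.HolderConjugate.one_le q p),
    dotp_comm]
  ring

end Pairing

theorem FM_translative_iff_general
    (μ : Measure Ω) [IsProbabilityMeasure μ] (d : ℕ)
    (p q : ℝ≥0∞) (hpq : 1 / p + 1 / q = 1)
    (M : Submodule ℝ (Vec d)) (Y : Lp (Vec d) q μ) (v : Vec d) :
    MTranslative M (fun X : Lp (Vec d) p μ => FM M Y v (-X)) ↔
      v ∈ {meanVec μ Y} + perpSet M := by
  have : p.HolderConjugate q := ENNReal.holderConjugate_iff.2 (by simpa only [one_div] using hpq)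
  have hshift : ∀ (X : Lp (Vec d) p μ), ∀ u ∈ M,
      (FM M Y v (-(X + constLp μ d p u)) = (fun w => w - u) '' FM M Y v (-X)) ↔
        halfSpaceIn M v (pairLp (-X) Y - dotp (meanVec μ Y) u) =
          halfSpaceIn M v (pairLp (-X) Y - dotp v u) := by
    intro X u hu
    rw [← image_sub_halfSpaceIn hu, ← pairLp_neg_add_constLp]
    rfl
  rw [MTranslative, mem_singleton_add_perpSet_iff]
  refine ⟨fun htr => forall_dotp_eq_of_forall_le fun u hu => ?_, fun horth X u hu => ?_⟩
  · have h := (hshift 0 u hu).1 (htr 0 u hu)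
    rw [neg_zero, pairLp_zero, zero_sub, zero_sub] at h
    exact dotp_le_of_halfSpaceIn_eq hu h
  · rw [hshift X u hu, horth u hu]

/-- `R(X) = F^M_{(Y,v)}[−X]` is `M`-translative iff `v ∈ E[Y] + M^⊥`. -/
theorem FM_translative_iff
    (μ : Measure Ω) [IsProbabilityMeasure μ] (d : ℕ) (hd : 1 ≤ d)
    (p q : ℝ≥0∞) (hp : 1 ≤ p) (hpq : 1 / p + 1 / q = 1)
    (M : Submodule ℝ (Vec d)) (Y : Lp (Vec d) q μ) (v : Vec d) (hv : v ∈ M) :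
    MTranslative M (fun X : Lp (Vec d) p μ => FM M Y v (-X)) ↔
      v ∈ {meanVec μ Y} + perpSet M :=
  FM_translative_iff_general μ d p q hpq M Y v
end
end
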